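/- arXiv:0906.4245 — 2 statements merged into one kernel-verified Lean document; each statement's English description precedes it below -/
import Mathlib

section
/- (Lemma 2) An element x of the ring T = ℤ[p,p⁻¹,q,q⁻¹]/((p−1)(p−q),(q−1)(p−q)) is a zero divisor (i.e. there exists y ≠ 0 in T with x·y = 0) if and only if ε(x) = 0, where ε : T → ℤ is the ring homomorphism determined by ε(p) = ε(q) = 1. -/
/-!  The ring `T = ℤ[p,p⁻¹,q,q⁻¹] / ((p−1)(p−q), (q−1)(p−q))`.

We realize the two-variable Laurent polynomial ring `ℤ[p,p⁻¹,q,q⁻¹]` as the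
iterated Laurent polynomial ring `(ℤ[T;T⁻¹])[T;T⁻¹]`, where the inner variable
is `p` and the outer variable is `q`.  -/

noncomputable section

abbrev L : Type := LaurentPolynomial (LaurentPolynomial ℤ)

def pL : L := LaurentPolynomial.C (LaurentPolynomial.T 1)

def qL : L := LaurentPolynomial.T 1

def idealI : Ideal L := Ideal.span {(pL - 1) * (pL - qL), (qL - 1) * (pL - qL)}

abbrev TT : Type := L ⧸ idealI

def pT : TT := Ideal.Quotient.mk idealI pL

def qT : TT := Ideal.Quotient.mk idealI qL

/-! Put `δ = p - q` and `𝔪 = (p - 1, q - 1)`, so that the defining ideal is `δ𝔪` and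
`𝔪 = ker ε`. The ideal `(δ)` is prime, being the kernel of the substitution `q ↦ p` into the
domain `ℤ[p, p⁻¹]`; moreover `δ ∈ 𝔪` and `δ` is a non-zero-divisor. If `x ∉ 𝔪` and `xy ∈ δ𝔪`,
then `x ∉ (δ) ⊆ 𝔪` forces `y = δh`, cancelling `δ` gives `xh ∈ 𝔪`, hence `h ∈ 𝔪` and
`y ∈ δ𝔪`. Conversely, for `x ∈ 𝔪` we have `xδ ∈ δ𝔪` while `δ ∉ δ𝔪`, since `𝔪 ≠ (1)`. -/

open LaurentPolynomial Ideal

namespace LaurentPolynomial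

theorem ringHom_ext {R S : Type*} [CommSemiring R] [Semiring S] {f g : R[T;T⁻¹] →+* S}
    (hC : ∀ a, f (C a) = g (C a)) (hT : f (T 1) = g (T 1)) : f = g :=
  IsLocalization.ringHom_ext (Submonoid.powers (Polynomial.X : Polynomial R)) <|
    Polynomial.ringHom_ext (fun a => by simpa [algebraMap_eq_toLaurent] using hC a)
      (by simpa [algebraMap_eq_toLaurent] using hT)

variable {R : Type*} [CommRing R] (u : Rˣ)

theorem ker_eval₂_id : RingHom.ker (eval₂ (RingHom.id R) u) = span {T 1 - C (u : R)} := by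
  refine le_antisymm (fun f hf => ?_) ((span_singleton_le_iff_mem _).2 (by simp))
  have hmk : (Ideal.Quotient.mk (span {T 1 - C (u : R)})).comp (C.comp (eval₂ (RingHom.id R) u)) =
      Ideal.Quotient.mk (span {T 1 - C (u : R)}) :=
    ringHom_ext (fun a => by simp) (by simp [Ideal.Quotient.eq, ← span_singleton_neg (T 1 - C _)])
  rw [← Ideal.Quotient.eq_zero_iff_mem, ← hmk]
  simp [RingHom.mem_ker.1 hf]

theorem isPrime_span_T_sub_C [IsDomain R] : (span {T 1 - C (u : R)}).IsPrime :=
  ker_eval₂_id u ▸ RingHom.ker_isPrime _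

end LaurentPolynomial

namespace Ideal

variable {R : Type*} [CommRing R] {δ : R} {m : Ideal R}

theorem notMem_span_singleton_mul_self (hδ : IsLeftRegular δ) (hm : m ≠ ⊤) :
    δ ∉ span {δ} * m := by
  intro h
  obtain ⟨z, hz, hδz⟩ := mem_span_singleton_mul.1 h
  have hz1 : z = 1 := hδ (by rw [hδz, mul_one] : δ * z = δ * 1)
  exact hm ((eq_top_iff_one m).2 (hz1 ▸ hz))

theorem mem_span_singleton_mul_of_mul_mem (hδ : IsLeftRegular δ) (hδp : (span {δ}).IsPrime)
    (hm : m.IsPrime) (hδm : δ ∈ m) {X Y : R} (hX : X ∉ m) (hXY : X * Y ∈ span {δ} * m) :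
    Y ∈ span {δ} * m := by
  obtain ⟨z, hz, hδz⟩ := mem_span_singleton_mul.1 hXY
  have hXYδ : X * Y ∈ span {δ} := mem_span_singleton.2 ⟨z, hδz.symm⟩
  rcases hδp.mem_or_mem hXYδ with hXδ | hYδ
  · exact absurd ((span_singleton_le_iff_mem m).2 hδm hXδ) hX
  obtain ⟨H, rfl⟩ := mem_span_singleton.1 hYδ
  have hXH : X * H = z := hδ (show δ * (X * H) = δ * z by rw [hδz]; ring)
  exact mem_span_singleton_mul.2 ⟨H, (hm.mem_or_mem (hXH ▸ hz)).resolve_left hX, rfl⟩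

theorem exists_ne_zero_mk_mul_eq_zero_iff (hδ : IsLeftRegular δ) (hδp : (span {δ}).IsPrime)
    (hm : m.IsPrime) (hδm : δ ∈ m) {I : Ideal R} (hI : I = span {δ} * m) (X : R) :
    (∃ y : R ⧸ I, y ≠ 0 ∧ Quotient.mk I X * y = 0) ↔ X ∈ m := by
  subst hI
  constructor
  · rintro ⟨y, hy, hXy⟩
    obtain ⟨Y, rfl⟩ := Quotient.mk_surjective y
    by_contra hX
    rw [← map_mul, Quotient.eq_zero_iff_mem] at hXy
    exact hy <| Quotient.eq_zero_iff_mem.2 <|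
      mem_span_singleton_mul_of_mul_mem hδ hδp hm hδm hX hXy
  · intro hX
    refine ⟨Quotient.mk _ δ, fun h => notMem_span_singleton_mul_self hδ hm.ne_top
      (Quotient.eq_zero_iff_mem.1 h), ?_⟩
    rw [← map_mul, Quotient.eq_zero_iff_mem, mul_comm X δ]
    exact mul_mem_mul (mem_span_singleton_self δ) hX

end Ideal

theorem ringHom_ext_L {S : Type*} [Semiring S] {f g : L →+* S} (hp : f pL = g pL)
    (hq : f qL = g qL) : f = g :=
  LaurentPolynomial.ringHom_ext (RingHom.congr_fun <| LaurentPolynomial.ringHom_ext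
    (f := f.comp C) (g := g.comp C)
    (RingHom.congr_fun (RingHom.ext_int ((f.comp C).comp C) ((g.comp C).comp C))) hp) hq

theorem pL_sub_qL_ne_zero : pL - qL ≠ 0 := by
  intro h
  simpa [pL, qL] using congrArg (eval₂ (eval₂ (RingHom.id ℤ) (-1)) 1) h

theorem isPrime_span_pL_sub_qL : (span {pL - qL}).IsPrime := by
  simpa [pL, qL, ← span_singleton_neg (T 1 - C (T 1))] using
    isPrime_span_T_sub_C (isUnit_T (R := ℤ) 1).unit

theorem ker_eq_span_pL_sub_one_qL_sub_one (e : L →+* ℤ) (hp : e pL = 1) (hq : e qL = 1) :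
    RingHom.ker e = span {pL - 1, qL - 1} := by
  refine le_antisymm (fun X hX => ?_) (span_le.2 ?_)
  · have mk_eq_one : ∀ y, y - 1 ∈ span {pL - 1, qL - 1} →
        Ideal.Quotient.mk (span {pL - 1, qL - 1}) y = 1 := fun y hy => by
      rw [← map_one (Ideal.Quotient.mk _)]
      exact Ideal.Quotient.eq.2 hy
    have hmk : Ideal.Quotient.mk (span {pL - 1, qL - 1}) =
        (Int.castRingHom (L ⧸ span {pL - 1, qL - 1})).comp e :=
      ringHom_ext_L (by simpa [hp] using mk_eq_one pL (subset_span (by simp)))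
        (by simpa [hq] using mk_eq_one qL (subset_span (by simp)))
    rw [← Ideal.Quotient.eq_zero_iff_mem, hmk]
    simp [RingHom.mem_ker.1 hX]
  · rintro _ (rfl | rfl) <;> simp [hp, hq]

theorem idealI_eq_span_mul_span : idealI = span {pL - qL} * span {pL - 1, qL - 1} := by
  rw [idealI, span_mul_span']
  congr 1
  ext
  simp [mul_comm, eq_comm]

/-- Lemma 2: An element `x` of `T` is a zero divisor (i.e. there
exists `y ≠ 0` with `x * y = 0`) if and only if `ε x = 0`, where `ε : T → ℤ`
is the ring homomorphism determined by `ε p = ε q = 1`. -/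
theorem zeroDivisor_iff_eval_eq_zero
    (ε : TT →+* ℤ) (hp : ε pT = 1) (hq : ε qT = 1) (x : TT) :
    (∃ y : TT, y ≠ 0 ∧ x * y = 0) ↔ ε x = 0 := by
  obtain ⟨X, rfl⟩ := Ideal.Quotient.mk_surjective x
  set e := ε.comp (Ideal.Quotient.mk idealI)
  have hδ : pL - qL ∈ RingHom.ker e := by
    rw [RingHom.mem_ker, map_sub]
    exact sub_eq_zero.2 (hp.trans hq.symm)
  exact exists_ne_zero_mk_mul_eq_zero_iff (IsRegular.of_ne_zero pL_sub_qL_ne_zero).left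
    isPrime_span_pL_sub_qL (RingHom.ker_isPrime e) hδ
    (ker_eq_span_pL_sub_one_qL_sub_one e hp hq ▸ idealI_eq_span_mul_span) X
end
end

section
/- In the ring T = ℤ[p,p⁻¹,q,q⁻¹]/((p−1)(p−q),(q−1)(p−q)), the element q − p is nonzero, i.e. p ≠ q in T; in particular the defining ideal ((p−1)(p−q),(q−1)(p−q)) is a proper ideal of the Laurent polynomial ring and T is a nontrivial ring. -/
/-!  The ring `T = ℤ[p,p⁻¹,q,q⁻¹] / ((p−1)(p−q), (q−1)(p−q))`.

We realize the two-variable Laurent polynomial ring `ℤ[p,p⁻¹,q,q⁻¹]` as the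
iterated Laurent polynomial ring `(ℤ[T;T⁻¹])[T;T⁻¹]`, where the inner variable
is `p` and the outer variable is `q`.  -/

noncomputable section

/-! Send `p ↦ 1` and `q ↦ 1 + ε` in the dual numbers `ℤ[ε]`. Then `p − 1 ↦ 0` and
`(q − 1)(p − q) ↦ −ε² = 0`, so the defining ideal lies in the kernel, while `q − p ↦ ε ≠ 0`. -/

open LaurentPolynomial DualNumber

section evalPQ

variable {R : Type*} [CommRing R]

def evalPQ (x y : Rˣ) : L →+* R :=
  eval₂ (eval₂ (Int.castRingHom R) x) y

@[simp]
lemma evalPQ_pL (x y : Rˣ) : evalPQ x y pL = x := by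
  simp [evalPQ, pL]

@[simp]
lemma evalPQ_qL (x y : Rˣ) : evalPQ x y qL = y := by
  simp [evalPQ, qL]

lemma idealI_le_ker_evalPQ {x y : Rˣ} (hx : ((x : R) - 1) * (x - y) = 0)
    (hy : ((y : R) - 1) * (x - y) = 0) : idealI ≤ RingHom.ker (evalPQ x y) := by
  rw [idealI, Ideal.span_le]
  rintro _ (rfl | rfl) <;> simpa

end evalPQ

lemma eps_ne_zero {R : Type*} [Semiring R] [Nontrivial R] : (ε : R[ε]) ≠ 0 :=
  fun h => by simpa using congrArg TrivSqZeroExt.snd h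

lemma qL_sub_pL_notMem_idealI : qL - pL ∉ idealI := by
  set u := (isNilpotent_eps (R := ℤ)).isUnit_one_add.unit
  have hker : idealI ≤ RingHom.ker (evalPQ 1 u) :=
    idealI_le_ker_evalPQ (by simp) (by simp [u, eps_mul_eps])
  intro h
  exact eps_ne_zero (by simpa [u] using hker h)

/-- In `T`, the element `q − p` is nonzero, i.e. `p ≠ q`; in
particular the defining ideal is proper and `T` is a nontrivial ring. -/
theorem q_sub_p_ne_zero : qT - pT ≠ 0 ∧ pT ≠ qT ∧ idealI ≠ ⊤ ∧ Nontrivial TT := by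
  have hne : qT - pT ≠ 0 := by
    rw [qT, pT, ← map_sub, Ne, Ideal.Quotient.eq_zero_iff_mem]
    exact qL_sub_pL_notMem_idealI
  have hproper : idealI ≠ ⊤ := fun h => qL_sub_pL_notMem_idealI (h ▸ Submodule.mem_top)
  exact ⟨hne, (sub_ne_zero.mp hne).symm, hproper, Ideal.Quotient.nontrivial_iff.mpr hproper⟩
end
end
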